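/- For a linear code D over Z/4Z of length n with dual D⊥ (with respect to the standard inner product mod 4), the symmetrized weight enumerators satisfy swe_{D⊥}(x,y,z) = (1/|D|) · swe_D(x + 2y + z, x − z, x − 2y + z). -/

import Mathlib

def alphaZ4 (i : ZMod 4) : ZMod 2 := (i.val : ZMod 2)
def betaZ4 (i : ZMod 4) : ZMod 2 := ((i.val / 2 : ℕ) : ZMod 2)
def gammaZ4 (i : ZMod 4) : ZMod 2 := betaZ4 i + alphaZ4 i

def grayMap {n : ℕ} (a : Fin n → ZMod 4) : (Fin n ⊕ Fin n) → ZMod 2 :=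
  Sum.elim (fun i => betaZ4 (a i)) (fun i => gammaZ4 (a i))

/-- Number of coordinates equal to 0. -/
def N0 {n : ℕ} (a : Fin n → ZMod 4) : ℕ := (Finset.univ.filter fun i => a i = 0).card
/-- Number of coordinates equal to ±1. -/
def N1 {n : ℕ} (a : Fin n → ZMod 4) : ℕ :=
  (Finset.univ.filter fun i => a i = 1 ∨ a i = 3).card
/-- Number of coordinates equal to 2. -/
def N2 {n : ℕ} (a : Fin n → ZMod 4) : ℕ := (Finset.univ.filter fun i => a i = 2).card

/-- The dual of a quaternary code under the standard inner product mod 4. -/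
def dualSet {n : ℕ} (D : Set (Fin n → ZMod 4)) : Set (Fin n → ZMod 4) :=
  { b | ∀ a ∈ D, ∑ i, a i * b i = 0 }

section Aux

variable {A : Type} [CommRing A]

private def chi4 (I : A) (t : ZMod 4) : A := I ^ t.val

private lemma zmod4_cases (c : ZMod 4) : c = 0 ∨ c = 1 ∨ c = 2 ∨ c = 3 := by revert c; decide

private lemma zmod4_sum (g : ZMod 4 → A) : ∑ b, g b = g 0 + g 1 + g 2 + g 3 := by
  show ∑ b : Fin 4, g b = _
  exact Fin.sum_univ_four g

private lemma chi4_add (I : A) (hI : I * I = -1) (s t : ZMod 4) :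
    chi4 I (s + t) = chi4 I s * chi4 I t := by
  have h4 : I ^ 4 = 1 := by
    have h : I ^ 4 = (I * I) * (I * I) := by ring
    rw [h, hI]; ring
  unfold chi4
  rw [← pow_add]
  have hv : s.val + t.val = 4 * ((s.val + t.val) / 4) + (s + t).val := by
    rw [ZMod.val_add]; omega
  rw [hv, pow_add, pow_mul, h4, one_pow, one_mul]

private lemma chi4_sum (I : A) (hI : I * I = -1) {ι : Type} (s : Finset ι) (g : ι → ZMod 4) :
    chi4 I (∑ i ∈ s, g i) = ∏ i ∈ s, chi4 I (g i) := by
  classical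
  induction s using Finset.induction_on with
  | empty => simp [chi4]
  | @insert a s hx ih => rw [Finset.sum_insert hx, Finset.prod_insert hx, chi4_add I hI, ih]

private lemma prod_ite_counts {n : ℕ} (X Y Z : A) (a : Fin n → ZMod 4) :
    (∏ i, if a i = 0 then X else if a i = 2 then Z else Y)
      = X ^ N0 a * Y ^ N1 a * Z ^ N2 a := by
  have key : ∀ c : ZMod 4, (if c = 0 then X else if c = 2 then Z else Y)
      = X ^ (if c = 0 then 1 else 0) * Y ^ (if c = 1 ∨ c = 3 then 1 else 0)
        * Z ^ (if c = 2 then 1 else 0) := by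
    intro c
    rcases zmod4_cases c with h | h | h | h <;> subst h <;>
      simp (config := { decide := true })
  simp_rw [key]
  rw [Finset.prod_mul_distrib, Finset.prod_mul_distrib,
    Finset.prod_pow_eq_pow_sum, Finset.prod_pow_eq_pow_sum, Finset.prod_pow_eq_pow_sum,
    N0, N1, N2, Finset.card_filter, Finset.card_filter, Finset.card_filter]

private lemma F_eval (I : A) (hI : I * I = -1) (x y z : A) (c : ZMod 4) :
    (∑ b : ZMod 4, chi4 I (c * b) * (if b = 0 then x else if b = 2 then z else y))
      = if c = 0 then x + 2 * y + z else if c = 2 then x - 2 * y + z else x - z := by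
  rcases zmod4_cases c with h | h | h | h <;> subst h <;> rw [zmod4_sum] <;>
    simp (config := { decide := true }) only [chi4, if_true, if_false,
      show ((0:ZMod 4)*0).val = 0 from rfl, show ((0:ZMod 4)*1).val = 0 from rfl,
      show ((0:ZMod 4)*2).val = 0 from rfl, show ((0:ZMod 4)*3).val = 0 from rfl,
      show ((1:ZMod 4)*0).val = 0 from rfl, show ((1:ZMod 4)*1).val = 1 from rfl,
      show ((1:ZMod 4)*2).val = 2 from rfl, show ((1:ZMod 4)*3).val = 3 from rfl,
      show ((2:ZMod 4)*0).val = 0 from rfl, show ((2:ZMod 4)*1).val = 2 from rfl,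
      show ((2:ZMod 4)*2).val = 0 from rfl, show ((2:ZMod 4)*3).val = 2 from rfl,
      show ((3:ZMod 4)*0).val = 0 from rfl, show ((3:ZMod 4)*1).val = 3 from rfl,
      show ((3:ZMod 4)*2).val = 2 from rfl, show ((3:ZMod 4)*3).val = 1 from rfl]
  · ring
  · linear_combination (z + I * y) * hI
  · linear_combination 2 * y * hI
  · linear_combination (I * y + z) * hI

end Aux

section SLemma

variable {n : ℕ} {A : Type} [CommRing A]

private lemma S_eval_mem (I : A) (D : AddSubgroup (Fin n → ZMod 4))
    (b : Fin n → ZMod 4) (hb : b ∈ dualSet (D : Set (Fin n → ZMod 4))) :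
    ∑ a ∈ (Set.toFinite (D : Set (Fin n → ZMod 4))).toFinset, chi4 I (∑ i, a i * b i)
      = (((Set.toFinite (D : Set (Fin n → ZMod 4))).toFinset.card : ℕ) : A) := by
  classical
  set DF := (Set.toFinite (D : Set (Fin n → ZMod 4))).toFinset with hDF
  have hmem : ∀ a, a ∈ DF ↔ a ∈ D := by
    intro a; rw [hDF, Set.Finite.mem_toFinset]; rfl
  rw [Finset.sum_congr rfl (fun a ha => ?_), Finset.sum_const, nsmul_eq_mul, mul_one]
  rw [show (∑ i, a i * b i) = 0 from hb a ((hmem a).1 ha)]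
  simp [chi4]

private lemma S_eval_not (I : A) (hI : I * I = -1) (D : AddSubgroup (Fin n → ZMod 4))
    (b : Fin n → ZMod 4) (hb : b ∉ dualSet (D : Set (Fin n → ZMod 4))) :
    ∑ a ∈ (Set.toFinite (D : Set (Fin n → ZMod 4))).toFinset, chi4 I (∑ i, a i * b i)
      = 0 := by
  classical
  set DF := (Set.toFinite (D : Set (Fin n → ZMod 4))).toFinset with hDF
  have hmem : ∀ a, a ∈ DF ↔ a ∈ D := by
    intro a; rw [hDF, Set.Finite.mem_toFinset]; rfl
  set φ : (Fin n → ZMod 4) → ZMod 4 := fun a => ∑ i, a i * b i with hφ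
  · have hφadd : ∀ a a', φ (a + a') = φ a + φ a' := by
      intro a a'
      simp only [hφ, Pi.add_apply, add_mul, Finset.sum_add_distrib]
    have htrans : ∀ a0 ∈ D, ∀ t : ZMod 4,
        (DF.filter fun a => φ a = t).card = (DF.filter fun a => φ a = t + φ a0).card := by
      intro a0 ha0 t
      apply Finset.card_nbij' (fun a => a + a0) (fun a => a - a0)
      · intro a ha
        rw [Finset.mem_coe, Finset.mem_filter] at ha ⊢
        exact ⟨(hmem _).2 (D.add_mem ((hmem a).1 ha.1) ha0), by rw [hφadd, ha.2]⟩
      · intro a ha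
        rw [Finset.mem_coe, Finset.mem_filter] at ha ⊢
        refine ⟨(hmem _).2 (D.sub_mem ((hmem a).1 ha.1) ha0), ?_⟩
        have h1 : φ (a - a0 + a0) = φ (a - a0) + φ a0 := hφadd _ _
        rw [sub_add_cancel, ha.2] at h1
        have := congrArg (fun u => u - φ a0) h1
        simpa using this.symm
      · intro a _; simp
      · intro a _; simp
    have hfib : ∑ a ∈ DF, chi4 I (φ a)
        = ∑ j : ZMod 4, ∑ a ∈ DF.filter fun a => φ a = j, chi4 I (φ a) := by
      rw [Finset.sum_fiberwise_eq_sum_filter DF Finset.univ φ (fun a => chi4 I (φ a))]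
      simp
    have hfib2 : ∀ j : ZMod 4, ∑ a ∈ DF.filter (fun a => φ a = j), chi4 I (φ a)
        = ((DF.filter fun a => φ a = j).card : A) * chi4 I j := by
      intro j
      rw [Finset.sum_congr rfl (fun a ha => by
        rw [(Finset.mem_filter.1 ha).2]), Finset.sum_const, nsmul_eq_mul]
    rw [hfib, zmod4_sum (fun j => ∑ a ∈ DF.filter fun a => φ a = j, chi4 I (φ a)),
      hfib2, hfib2, hfib2, hfib2]
    -- obtain a0 ∈ D with φ a0 ≠ 0
    have hne : ∃ a0 ∈ D, φ a0 ≠ 0 := by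
      by_contra hcon
      push_neg at hcon
      exact hb fun a ha => hcon a ha
    obtain ⟨a0, ha0, ha0ne⟩ := hne
    have hv0 : chi4 I (0 : ZMod 4) = 1 := by simp [chi4]
    have hv1 : chi4 I (1 : ZMod 4) = I := by
      show I ^ (1 : ZMod 4).val = I
      rw [show (1 : ZMod 4).val = 1 from rfl, pow_one]
    have hv2 : chi4 I (2 : ZMod 4) = I * I := by
      show I ^ (2 : ZMod 4).val = I * I; rw [show (2 : ZMod 4).val = 2 from rfl]; ring
    have hv3 : chi4 I (3 : ZMod 4) = I * I * I := by
      show I ^ (3 : ZMod 4).val = I * I * I; rw [show (3 : ZMod 4).val = 3 from rfl]; ring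
    rw [hv0, hv1, hv2, hv3]
    by_cases hodd : ∃ a ∈ D, φ a = 1 ∨ φ a = 3
    · obtain ⟨a1, ha1, hval⟩ := hodd
      have hall : ∀ t : ZMod 4, (DF.filter fun a => φ a = t).card
          = (DF.filter fun a => φ a = t + φ a1).card := htrans a1 ha1
      have step : ∀ t u : ZMod 4, t + φ a1 = u →
          (DF.filter fun a => φ a = t).card = (DF.filter fun a => φ a = u).card := by
        intro t u hu
        rw [hall t, hu]
      have e123 : (DF.filter fun a => φ a = 1).card = (DF.filter fun a => φ a = 0).card ∧
          (DF.filter fun a => φ a = 2).card = (DF.filter fun a => φ a = 0).card ∧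
          (DF.filter fun a => φ a = 3).card = (DF.filter fun a => φ a = 0).card := by
        rcases hval with h | h
        · have h01 := step 0 1 (by rw [h]; decide)
          have h12 := step 1 2 (by rw [h]; decide)
          have h23 := step 2 3 (by rw [h]; decide)
          exact ⟨h01.symm, (h01.trans h12).symm, ((h01.trans h12).trans h23).symm⟩
        · have h03 := step 0 3 (by rw [h]; decide)
          have h32 := step 3 2 (by rw [h]; decide)
          have h21 := step 2 1 (by rw [h]; decide)
          exact ⟨((h03.trans h32).trans h21).symm, (h03.trans h32).symm, h03.symm⟩
      rw [e123.1, e123.2.1, e123.2.2]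
      set k := ((DF.filter fun a => φ a = 0).card : A)
      linear_combination k * (1 + I) * hI
    · push_neg at hodd
      have heven : ∀ a ∈ D, φ a = 0 ∨ φ a = 2 := by
        intro a ha
        rcases zmod4_cases (φ a) with h | h | h | h
        · exact Or.inl h
        · exact absurd h (hodd a ha).1
        · exact Or.inr h
        · exact absurd h (hodd a ha).2
      have ha02 : φ a0 = 2 := (heven a0 ha0).resolve_left ha0ne
      have e1 : (DF.filter fun a => φ a = 1).card = 0 := by
        rw [Finset.card_eq_zero, Finset.filter_eq_empty_iff]
        intro a ha
        rcases heven a ((hmem a).1 ha) with h | h <;> rw [h] <;> decide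
      have e3 : (DF.filter fun a => φ a = 3).card = 0 := by
        rw [Finset.card_eq_zero, Finset.filter_eq_empty_iff]
        intro a ha
        rcases heven a ((hmem a).1 ha) with h | h <;> rw [h] <;> decide
      have e2 : (DF.filter fun a => φ a = 2).card = (DF.filter fun a => φ a = 0).card := by
        rw [htrans a0 ha0 0, ha02]; norm_num
      rw [e1, e2, e3]
      set k := ((DF.filter fun a => φ a = 0).card : A)
      push_cast
      linear_combination k * hI

end SLemma

section KeyLemma

variable {n : ℕ} {A : Type} [CommRing A]

private lemma key_identity (I : A) (hI : I * I = -1)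
    (D : AddSubgroup (Fin n → ZMod 4)) (x y z : A) :
    (((Set.toFinite (D : Set (Fin n → ZMod 4))).toFinset.card : ℕ) : A) *
      ∑ b ∈ (Set.toFinite (dualSet (D : Set (Fin n → ZMod 4)))).toFinset,
        x ^ N0 b * y ^ N1 b * z ^ N2 b
    = ∑ a ∈ (Set.toFinite (D : Set (Fin n → ZMod 4))).toFinset,
        (x + 2 * y + z) ^ N0 a * (x - z) ^ N1 a * (x - 2 * y + z) ^ N2 a := by
  classical
  set DF := (Set.toFinite (D : Set (Fin n → ZMod 4))).toFinset with hDF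
  have hRHS : ∀ a : Fin n → ZMod 4,
      (x + 2 * y + z) ^ N0 a * (x - z) ^ N1 a * (x - 2 * y + z) ^ N2 a
        = ∏ i, ∑ c : ZMod 4, chi4 I (a i * c) *
            (if c = 0 then x else if c = 2 then z else y) := by
    intro a
    rw [← prod_ite_counts (x + 2 * y + z) (x - z) (x - 2 * y + z) a]
    exact Finset.prod_congr rfl fun i _ => (F_eval I hI x y z (a i)).symm
  symm
  calc
    ∑ a ∈ DF, (x + 2 * y + z) ^ N0 a * (x - z) ^ N1 a * (x - 2 * y + z) ^ N2 a
        = ∑ a ∈ DF, ∏ i, ∑ c : ZMod 4, chi4 I (a i * c) *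
            (if c = 0 then x else if c = 2 then z else y) :=
      Finset.sum_congr rfl fun a _ => hRHS a
    _ = ∑ a ∈ DF, ∑ bb ∈ Fintype.piFinset (fun _ : Fin n => (Finset.univ : Finset (ZMod 4))),
          ∏ i, chi4 I (a i * bb i) * (if bb i = 0 then x else if bb i = 2 then z else y) :=
      Finset.sum_congr rfl fun a _ => Finset.prod_univ_sum _ _
    _ = ∑ a ∈ DF, ∑ bb : Fin n → ZMod 4,
          ∏ i, chi4 I (a i * bb i) * (if bb i = 0 then x else if bb i = 2 then z else y) := by
      rw [Fintype.piFinset_univ]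
    _ = ∑ bb : Fin n → ZMod 4, ∑ a ∈ DF,
          ∏ i, chi4 I (a i * bb i) * (if bb i = 0 then x else if bb i = 2 then z else y) :=
      Finset.sum_comm
    _ = ∑ bb : Fin n → ZMod 4, (∑ a ∈ DF, chi4 I (∑ i, a i * bb i)) *
          ∏ i, (if bb i = 0 then x else if bb i = 2 then z else y) := by
      refine Finset.sum_congr rfl fun bb _ => ?_
      rw [Finset.sum_mul]
      refine Finset.sum_congr rfl fun a _ => ?_
      rw [Finset.prod_mul_distrib, chi4_sum I hI]
    _ = ∑ bb ∈ Finset.univ.filter (fun bb => bb ∈ dualSet (D : Set (Fin n → ZMod 4))),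
          (∑ a ∈ DF, chi4 I (∑ i, a i * bb i)) *
          ∏ i, (if bb i = 0 then x else if bb i = 2 then z else y) := by
      symm
      apply Finset.sum_subset (Finset.filter_subset _ _)
      intro bb _ hbb
      rw [Finset.mem_filter] at hbb
      push_neg at hbb
      rw [S_eval_not I hI D bb (hbb (Finset.mem_univ bb)), zero_mul]
    _ = ∑ bb ∈ (Set.toFinite (dualSet (D : Set (Fin n → ZMod 4)))).toFinset,
          ((DF.card : ℕ) : A) * (x ^ N0 bb * y ^ N1 bb * z ^ N2 bb) := by
      refine Finset.sum_congr ?_ fun bb hbb => ?_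
      · ext bb
        simp only [Finset.mem_filter, Finset.mem_univ, true_and, Set.Finite.mem_toFinset]
      · rw [Set.Finite.mem_toFinset] at hbb
        rw [S_eval_mem I D bb hbb, prod_ite_counts]
    _ = ((DF.card : ℕ) : A) * ∑ bb ∈ (Set.toFinite (dualSet (D : Set (Fin n → ZMod 4)))).toFinset,
          x ^ N0 bb * y ^ N1 bb * z ^ N2 bb := by
      rw [Finset.mul_sum]

end KeyLemma

theorem swe_macwilliams {n : ℕ} (D : AddSubgroup (Fin n → ZMod 4))
    (R : Type) [CommRing R] (x y z : R) :
    (Nat.card D : R) *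
      ∑ᶠ b ∈ dualSet (D : Set (Fin n → ZMod 4)), x ^ N0 b * y ^ N1 b * z ^ N2 b =
    ∑ᶠ a ∈ (D : Set (Fin n → ZMod 4)),
        (x + 2 * y + z) ^ N0 a * (x - z) ^ N1 a * (x - 2 * y + z) ^ N2 a := by
  classical
  rcases subsingleton_or_nontrivial R with hR | hR
  · exact Subsingleton.elim _ _
  have hDfin : (D : Set (Fin n → ZMod 4)).Finite := Set.toFinite _
  have hdualfin : (dualSet (D : Set (Fin n → ZMod 4))).Finite := Set.toFinite _
  have h1 : ∑ᶠ b ∈ dualSet (D : Set (Fin n → ZMod 4)), x ^ N0 b * y ^ N1 b * z ^ N2 b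
      = ∑ b ∈ hdualfin.toFinset, x ^ N0 b * y ^ N1 b * z ^ N2 b := by
    rw [← finsum_mem_coe_finset, Set.Finite.coe_toFinset]
  have h2 : ∑ᶠ a ∈ (D : Set (Fin n → ZMod 4)),
        (x + 2 * y + z) ^ N0 a * (x - z) ^ N1 a * (x - 2 * y + z) ^ N2 a
      = ∑ a ∈ hDfin.toFinset,
        (x + 2 * y + z) ^ N0 a * (x - z) ^ N1 a * (x - 2 * y + z) ^ N2 a := by
    rw [← finsum_mem_coe_finset, Set.Finite.coe_toFinset]
  rw [h1, h2]
  have hcard : (Nat.card D : R) = ((hDfin.toFinset.card : ℕ) : R) := by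
    congr 1
    rw [← SetLike.coe_sort_coe, Nat.card_coe_set_eq, Set.ncard_eq_toFinset_card _ hDfin]
  rw [hcard]
  set f : Polynomial R := Polynomial.X ^ 2 + Polynomial.C 1 with hf
  have hmonic : f.Monic := Polynomial.monic_X_pow_add
    (lt_of_le_of_lt Polynomial.degree_C_le (by norm_num))
  have hdeg : f.degree = 2 := Polynomial.degree_X_pow_add_C (by norm_num) 1
  set I : AdjoinRoot f := AdjoinRoot.root f with hIdef
  have hI : I * I = -1 := by
    have h0 : AdjoinRoot.mk f f = 0 := AdjoinRoot.mk_self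
    have h3 : I ^ 2 + 1 = 0 := by
      have : AdjoinRoot.mk f (Polynomial.X ^ 2 + Polynomial.C 1) = 0 := by rw [← hf]; exact h0
      simpa [map_add, map_pow, AdjoinRoot.mk_X] using this
    linear_combination h3
  have hinj : Function.Injective (AdjoinRoot.of f) := by
    intro r s hrs
    have hmk : AdjoinRoot.mk f (Polynomial.C r) = AdjoinRoot.mk f (Polynomial.C s) := hrs
    have h2' := congrArg (AdjoinRoot.modByMonicHom hmonic) hmk
    rw [AdjoinRoot.modByMonicHom_mk, AdjoinRoot.modByMonicHom_mk,
      (Polynomial.modByMonic_eq_self_iff hmonic).2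
        (lt_of_le_of_lt Polynomial.degree_C_le (by rw [hdeg]; norm_num)),
      (Polynomial.modByMonic_eq_self_iff hmonic).2
        (lt_of_le_of_lt Polynomial.degree_C_le (by rw [hdeg]; norm_num))] at h2'
    exact Polynomial.C_injective h2'
  apply hinj
  rw [map_mul, map_natCast, map_sum, map_sum]
  simp only [map_mul, map_pow, map_add, map_sub, map_ofNat]
  exact key_identity I hI D ((AdjoinRoot.of f) x) ((AdjoinRoot.of f) y) ((AdjoinRoot.of f) z)
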